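/- arXiv:1402.1585 — 3 statements merged into one kernel-verified Lean document; each statement's English description precedes it below -/
import Mathlib

section
/- Let x, y, z be nonzero complex numbers with x + y + z = 0, and let r, s, t ≥ 1 be integers with k = r+s+t−1. Then 0 = Σ_{i+j=k, i,j≥1} C(i−1,t−1)C(j−1,s−1)(−1)^{i+r} x^{−i}y^{−j} + Σ_{j+h=k, j,h≥1} C(j−1,r−1)C(h−1,t−1)(−1)^{j+s} y^{−j}z^{−h} + Σ_{h+i=k, h,i≥1} C(h−1,s−1)C(i−1,r−1)(−1)^{h+t} z^{−h}x^{−i}, where C(a,b) denotes the binomial coefficient. -/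
/-!
Put `u = x⁻¹`, `v = y⁻¹`, `w = z⁻¹`; then `u * v + v * w + w * u = 0` and `u + v`, `v + w`,
`w + u` are nonzero. The three sums become `B(u, v; m, n, p)`, `B(v, w; n, p, m)`,
`B(w, u; p, m, n)` with `(m, n, p) = (r - 1, s - 1, t - 1)`. Pascal's rule gives recurrences for
`B` which express `(u + v)` times the cyclic sum at `(m, n + 1, p + 1)` through the cyclic sums at
`(m, n, p + 1)` and `(m, n + 1, p)` and a multiple of `u * v + v * w + w * u`. Induction on
`m + n + p`, rotating the variables when an index vanishes, reduces everything to `n = p = 0`,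
where the identity is a geometric sum.
-/

open Finset

section
variable {R : Type*} [CommRing R]

/-- `B(u, v; m, n, p)`, the first sum of the theorem in `u = x⁻¹`, `v = y⁻¹`, reindexed by
`(a, b) = (i - 1, k - i - 1)`. -/
def binomPowSum (u v : R) (m n p : ℕ) : R :=
  ∑ q ∈ antidiagonal (m + n + p),
    (q.1.choose p : R) * (q.2.choose n : R) * (-1) ^ (q.1 + m) * u ^ (q.1 + 1) * v ^ (q.2 + 1)

variable (u v w : R)

theorem binomPowSum_succ_m_succ_p (m n p : ℕ) :
    binomPowSum u v (m + 1) n (p + 1) =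
      u * (binomPowSum u v m n (p + 1) - binomPowSum u v (m + 1) n p) := by
  rw [binomPowSum, show m + 1 + n + (p + 1) = m + n + p + 1 + 1 by omega, Nat.sum_antidiagonal_succ,
    binomPowSum, binomPowSum, show m + n + (p + 1) = m + n + p + 1 by omega,
    show m + 1 + n + p = m + n + p + 1 by omega, mul_sub, mul_sum, mul_sum, ← sum_sub_distrib]
  simp only [Nat.choose_zero_succ, Nat.cast_zero, zero_mul, zero_add, Nat.choose_succ_succ,
    Nat.cast_add]
  exact sum_congr rfl fun _ _ => by ring

theorem binomPowSum_succ_m_succ_n (m n p : ℕ) :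
    binomPowSum u v (m + 1) (n + 1) p =
      v * (binomPowSum u v (m + 1) n p - binomPowSum u v m (n + 1) p) := by
  rw [binomPowSum, show m + 1 + (n + 1) + p = m + n + p + 1 + 1 by omega,
    Nat.sum_antidiagonal_succ',
    binomPowSum, binomPowSum, show m + 1 + n + p = m + n + p + 1 by omega,
    show m + (n + 1) + p = m + n + p + 1 by omega, mul_sub, mul_sum, mul_sum, ← sum_sub_distrib]
  simp only [Nat.choose_zero_succ, Nat.cast_zero, mul_zero, zero_mul, zero_add,
    Nat.choose_succ_succ, Nat.cast_add]
  exact sum_congr rfl fun _ _ => by ring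

theorem add_mul_binomPowSum_succ_n_succ_p (m n p : ℕ) :
    (u + v) * binomPowSum u v m (n + 1) (p + 1) =
      u * v * (binomPowSum u v m n (p + 1) - binomPowSum u v m (n + 1) p) := by
  rw [binomPowSum, binomPowSum, binomPowSum,
    show m + (n + 1) + (p + 1) = m + n + p + 1 + 1 by omega,
    show m + n + (p + 1) = m + n + p + 1 by omega, show m + (n + 1) + p = m + n + p + 1 by omega,
    add_mul, mul_sum, mul_sum, Nat.sum_antidiagonal_succ' (n := m + n + p + 1),
    Nat.sum_antidiagonal_succ (n := m + n + p + 1), mul_sub, mul_sum, mul_sum, ← sum_sub_distrib]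
  simp only [Nat.choose_zero_succ, Nat.cast_zero, mul_zero, zero_mul, zero_add,
    Nat.choose_succ_succ, Nat.cast_add]
  rw [← sum_add_distrib]
  exact sum_congr rfl fun _ _ => by ring

theorem binomPowSum_zero_left (n p : ℕ) :
    binomPowSum u v 0 n p = (-1) ^ p * u ^ (p + 1) * v ^ (n + 1) := by
  rw [binomPowSum, sum_eq_single (p, n)]
  · simp
  · rintro ⟨a, b⟩ hab hne
    rw [HasAntidiagonal.mem_antidiagonal] at hab
    rcases lt_or_gt_of_ne (show a ≠ p by rintro rfl; exact hne (by ext <;> simp; omega)) with h | h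
    · simp [Nat.choose_eq_zero_of_lt h]
    · simp [Nat.choose_eq_zero_of_lt (show b < n by omega)]
  · simp [add_comm]

theorem add_mul_binomPowSum_zero_zero (m : ℕ) :
    (u + v) * binomPowSum u v m 0 0 = u * v * (u ^ (m + 1) + (-1) ^ m * v ^ (m + 1)) := by
  have hgeom := geom_sum₂_mul (-u) v (m + 1)
  have hsum : binomPowSum u v m 0 0 =
      u * v * (-1) ^ m * ∑ i ∈ range (m + 1), (-u) ^ i * v ^ (m + 1 - 1 - i) := by
    rw [binomPowSum, Nat.sum_antidiagonal_eq_sum_range_succ_mk, mul_sum]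
    refine sum_congr rfl fun i hi => ?_
    rw [mem_range] at hi
    obtain ⟨j, rfl⟩ : ∃ j, m = i + j := ⟨m - i, by omega⟩
    simp only [add_zero, Nat.choose_zero_right, Nat.cast_one, one_mul, Nat.add_sub_cancel,
      Nat.add_sub_cancel_left]
    ring
  have hsign : ((-1 : R) ^ m) ^ 2 = 1 := by rw [← pow_mul, pow_mul']; simp
  rw [hsum]
  linear_combination (-(u * v * (-1) ^ m)) * hgeom + u ^ (m + 2) * v * hsign

def cyclicBinomPowSum (m n p : ℕ) : R :=
  binomPowSum u v m n p + binomPowSum v w n p m + binomPowSum w u p m n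

theorem cyclicBinomPowSum_rotate (m n p : ℕ) :
    cyclicBinomPowSum u v w m n p = cyclicBinomPowSum v w u n p m := by
  simp only [cyclicBinomPowSum]; ring

variable {u v w} [NoZeroDivisors R]

theorem cyclicBinomPowSum_zero_zero (huv : u + v ≠ 0) (hrel : u * v + v * w + w * u = 0)
    (m : ℕ) :
    cyclicBinomPowSum u v w m 0 0 = 0 := by
  refine (mul_eq_zero.mp ?_).resolve_left huv
  rw [cyclicBinomPowSum, mul_add, mul_add, add_mul_binomPowSum_zero_zero, binomPowSum_zero_left,
    binomPowSum_zero_left]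
  linear_combination (u ^ (m + 1) + (-1) ^ m * v ^ (m + 1)) * hrel

theorem cyclicBinomPowSum_succ_succ (huv : u + v ≠ 0) (hrel : u * v + v * w + w * u = 0)
    {m n p : ℕ}
    (h₁ : cyclicBinomPowSum u v w m n (p + 1) = 0) (h₂ : cyclicBinomPowSum u v w m (n + 1) p = 0) :
    cyclicBinomPowSum u v w m (n + 1) (p + 1) = 0 := by
  refine (mul_eq_zero.mp ?_).resolve_left huv
  rw [cyclicBinomPowSum] at h₁ h₂ ⊢
  linear_combination add_mul_binomPowSum_succ_n_succ_p u v m n p +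
    (u + v) * binomPowSum_succ_m_succ_n v w n p m + (u + v) * binomPowSum_succ_m_succ_p w u p m n +
    u * v * h₁ - u * v * h₂ + (binomPowSum v w (n + 1) p m + binomPowSum w u p m (n + 1) -
      binomPowSum v w n (p + 1) m - binomPowSum w u (p + 1) m n) * hrel

theorem cyclicBinomPowSum_eq_zero (huv : u + v ≠ 0) (hvw : v + w ≠ 0) (hwu : w + u ≠ 0)
    (hrel : u * v + v * w + w * u = 0) (m n p : ℕ) : cyclicBinomPowSum u v w m n p = 0 := by
  induction hN : m + n + p using Nat.strong_induction_on generalizing u v w m n p with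
  | _ N ih =>
  have hrel' : v * w + w * u + u * v = 0 := by linear_combination hrel
  have hrel'' : w * u + u * v + v * w = 0 := by linear_combination hrel
  match m, n, p with
  | m, 0, 0 => exact cyclicBinomPowSum_zero_zero huv hrel m
  | 0, n + 1, 0 =>
    rw [cyclicBinomPowSum_rotate]
    exact cyclicBinomPowSum_zero_zero hvw hrel' (n + 1)
  | 0, 0, p + 1 =>
    rw [cyclicBinomPowSum_rotate, cyclicBinomPowSum_rotate]
    exact cyclicBinomPowSum_zero_zero hwu hrel'' (p + 1)
  | m, n + 1, p + 1 =>
    exact cyclicBinomPowSum_succ_succ huv hrel (ih _ (by omega) huv hvw hwu hrel _ _ _ rfl)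
      (ih _ (by omega) huv hvw hwu hrel _ _ _ rfl)
  | m + 1, n + 1, 0 =>
    rw [cyclicBinomPowSum_rotate, cyclicBinomPowSum_rotate]
    exact cyclicBinomPowSum_succ_succ hwu hrel'' (ih _ (by omega) hwu huv hvw hrel'' _ _ _ rfl)
      (ih _ (by omega) hwu huv hvw hrel'' _ _ _ rfl)
  | m + 1, 0, p + 1 =>
    rw [cyclicBinomPowSum_rotate]
    exact cyclicBinomPowSum_succ_succ hvw hrel' (ih _ (by omega) hvw hwu huv hrel' _ _ _ rfl)
      (ih _ (by omega) hvw hwu huv hrel' _ _ _ rfl)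

end

theorem sum_Icc_zpow_eq_binomPowSum {K : Type*} [Field K] (x y : K) (m n p k : ℕ)
    (hk : k = m + n + p + 2) :
    ∑ i ∈ Icc 1 (k - 1), ((i - 1).choose p : K) * ((k - i - 1).choose n : K) *
      (-1) ^ (i + (m + 1)) * (x ^ (-(i : ℤ)) * y ^ (-((k - i : ℕ) : ℤ))) =
      binomPowSum x⁻¹ y⁻¹ m n p := by
  subst hk
  refine sum_nbij' (fun i => (i - 1, m + n + p + 2 - i - 1)) (fun q => q.1 + 1) ?_ ?_ ?_ ?_ ?_
  · intro i hi
    simp only [mem_Icc, HasAntidiagonal.mem_antidiagonal] at hi ⊢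
    omega
  · intro q hq
    simp only [mem_Icc, HasAntidiagonal.mem_antidiagonal] at hq ⊢
    omega
  · intro i hi
    simp only [mem_Icc] at hi
    omega
  · intro q hq
    simp only [HasAntidiagonal.mem_antidiagonal] at hq
    exact Prod.ext (Nat.add_sub_cancel ..) (by dsimp only; omega)
  · intro i hi
    simp only [mem_Icc] at hi
    obtain ⟨a, rfl⟩ : ∃ a, i = a + 1 := ⟨i - 1, by omega⟩
    obtain ⟨b, hb⟩ : ∃ b, m + n + p + 2 - (a + 1) = b + 1 := ⟨m + n + p - a, by omega⟩
    simp only [hb, Nat.add_sub_cancel, zpow_neg, zpow_natCast, inv_pow]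
    ring

/-- Lemma 3 of Hirose–Sato–Tasaka: for nonzero complex `x, y, z` with `x + y + z = 0`
and integers `r, s, t ≥ 1` with `k = r + s + t - 1`, the three binomial sums of
negative powers vanish. -/
theorem partial_fraction_three_term (x y z : ℂ) (hx : x ≠ 0) (hy : y ≠ 0) (hz : z ≠ 0)
    (hxyz : x + y + z = 0) (r s t : ℕ) (hr : 1 ≤ r) (hs : 1 ≤ s) (ht : 1 ≤ t)
    (k : ℕ) (hk : k = r + s + t - 1) :
    0 = (∑ i ∈ Finset.Icc 1 (k - 1), ((i - 1).choose (t - 1) : ℂ) *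
          ((k - i - 1).choose (s - 1) : ℂ) * (-1) ^ (i + r) *
          (x ^ (-(i : ℤ)) * y ^ (-((k - i : ℕ) : ℤ))))
      + (∑ j ∈ Finset.Icc 1 (k - 1), ((j - 1).choose (r - 1) : ℂ) *
          ((k - j - 1).choose (t - 1) : ℂ) * (-1) ^ (j + s) *
          (y ^ (-(j : ℤ)) * z ^ (-((k - j : ℕ) : ℤ))))
      + (∑ h ∈ Finset.Icc 1 (k - 1), ((h - 1).choose (s - 1) : ℂ) *
          ((k - h - 1).choose (r - 1) : ℂ) * (-1) ^ (h + t) *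
          (z ^ (-(h : ℤ)) * x ^ (-((k - h : ℕ) : ℤ)))) := by
  obtain ⟨m, rfl⟩ : ∃ m, r = m + 1 := ⟨r - 1, by omega⟩
  obtain ⟨n, rfl⟩ : ∃ n, s = n + 1 := ⟨s - 1, by omega⟩
  obtain ⟨p, rfl⟩ : ∃ p, t = p + 1 := ⟨t - 1, by omega⟩
  simp only [Nat.add_sub_cancel]
  rw [sum_Icc_zpow_eq_binomPowSum x y m n p k (by omega),
    sum_Icc_zpow_eq_binomPowSum y z n p m k (by omega),
    sum_Icc_zpow_eq_binomPowSum z x p m n k (by omega)]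
  have inv_add_inv_ne_zero {a b : ℂ} (ha : a ≠ 0) (hb : b ≠ 0) (hab : a + b ≠ 0) :
      a⁻¹ + b⁻¹ ≠ 0 := by
    rw [inv_add_inv ha hb]
    exact div_ne_zero hab (mul_ne_zero ha hb)
  have hrel : x⁻¹ * y⁻¹ + y⁻¹ * z⁻¹ + z⁻¹ * x⁻¹ = 0 := by
    field_simp
    linear_combination hxyz
  exact (cyclicBinomPowSum_eq_zero
    (inv_add_inv_ne_zero hx hy fun h => hz (by linear_combination hxyz - h))
    (inv_add_inv_ne_zero hy hz fun h => hx (by linear_combination hxyz - h))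
    (inv_add_inv_ne_zero hz hx fun h => hy (by linear_combination hxyz - h)) hrel m n p).symm
end

section
/- Let x, z be nonzero complex numbers with x + z ≠ 0, and let r, s ≥ 1 be integers. Then x^{−r} z^{−s} = Σ_{i+j=r+s, i,j≥1} ( C(i−1,s−1) (x+z)^{−i} x^{−j} + C(i−1,r−1) (x+z)^{−i} z^{−j} ), where C(a,b) denotes the binomial coefficient (the partial fraction decomposition of x^{−r}z^{−s}). -/
open Complex Finset

lemma pfd_aux (x z : ℂ) (hx : x ≠ 0) (hz : z ≠ 0) (hxz : x + z ≠ 0) :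
    ∀ n a b : ℕ, a + b = n →
    (x ^ (a + 1))⁻¹ * (z ^ (b + 1))⁻¹ =
      ∑ k ∈ Finset.range (n + 1),
        ((k.choose b : ℂ) * ((x + z) ^ (k + 1))⁻¹ * (x ^ (n + 1 - k))⁻¹
          + (k.choose a : ℂ) * ((x + z) ^ (k + 1))⁻¹ * (z ^ (n + 1 - k))⁻¹) := by
  intro n
  induction n with
  | zero =>
    intro a b hab
    obtain rfl : a = 0 := by omega
    obtain rfl : b = 0 := by omega
    rw [Finset.sum_range_one]
    simp only [Nat.choose_self, Nat.cast_one, one_mul, pow_one, Nat.sub_zero]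
    field_simp [hx, hz, hxz]
    ring
  | succ n ih =>
    intro a b hab
    rw [Finset.sum_range_succ']
    rcases Nat.eq_zero_or_pos b with hb | hb
    · subst hb
      obtain rfl : a = n + 1 := by omega
      have key : ∀ k ∈ Finset.range (n + 1),
          ((k+1).choose 0 : ℂ) * ((x + z) ^ (k + 1 + 1))⁻¹ * (x ^ (n + 1 + 1 - (k+1)))⁻¹
            + ((k+1).choose (n+1) : ℂ) * ((x + z) ^ (k + 1 + 1))⁻¹ * (z ^ (n + 1 + 1 - (k+1)))⁻¹
          = (x+z)⁻¹ * ((k.choose 0 : ℂ) * ((x + z) ^ (k + 1))⁻¹ * (x ^ (n + 1 - k))⁻¹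
            + (k.choose n : ℂ) * ((x + z) ^ (k + 1))⁻¹ * (z ^ (n + 1 - k))⁻¹) := by
        intro k hk
        have hk' : k < n + 1 := Finset.mem_range.mp hk
        have h1 : (k+1).choose (n+1) = k.choose n := by
          rw [Nat.choose_succ_succ', Nat.choose_eq_zero_of_lt hk', Nat.add_zero]
        have h2 : n + 1 + 1 - (k+1) = n + 1 - k := by omega
        have h3 : ((x + z) ^ (k + 1 + 1))⁻¹ = (x+z)⁻¹ * ((x + z) ^ (k + 1))⁻¹ := by
          rw [pow_succ, mul_inv]; ring
        rw [h1, h2, h3]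
        simp only [Nat.choose_zero_right, Nat.cast_one]
        ring
      rw [Finset.sum_congr rfl key, ← Finset.mul_sum, ← ih n 0 rfl]
      simp only [Nat.choose_zero_right, Nat.cast_one, Nat.choose_eq_zero_of_lt (Nat.succ_pos n),
        Nat.cast_zero, zero_mul, mul_zero, add_zero, one_mul, pow_one, Nat.add_sub_cancel,
        Nat.sub_zero]
      field_simp [hx, hz, hxz]
      ring
    · rcases Nat.eq_zero_or_pos a with ha | ha
      · subst ha
        obtain rfl : b = n + 1 := by omega
        have key : ∀ k ∈ Finset.range (n + 1),
            ((k+1).choose (n+1) : ℂ) * ((x + z) ^ (k + 1 + 1))⁻¹ * (x ^ (n + 1 + 1 - (k+1)))⁻¹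
              + ((k+1).choose 0 : ℂ) * ((x + z) ^ (k + 1 + 1))⁻¹ * (z ^ (n + 1 + 1 - (k+1)))⁻¹
            = (x+z)⁻¹ * ((k.choose n : ℂ) * ((x + z) ^ (k + 1))⁻¹ * (x ^ (n + 1 - k))⁻¹
              + (k.choose 0 : ℂ) * ((x + z) ^ (k + 1))⁻¹ * (z ^ (n + 1 - k))⁻¹) := by
          intro k hk
          have hk' : k < n + 1 := Finset.mem_range.mp hk
          have h1 : (k+1).choose (n+1) = k.choose n := by
            rw [Nat.choose_succ_succ', Nat.choose_eq_zero_of_lt hk', Nat.add_zero]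
          have h2 : n + 1 + 1 - (k+1) = n + 1 - k := by omega
          have h3 : ((x + z) ^ (k + 1 + 1))⁻¹ = (x+z)⁻¹ * ((x + z) ^ (k + 1))⁻¹ := by
            rw [pow_succ, mul_inv]; ring
          rw [h1, h2, h3]
          simp only [Nat.choose_zero_right, Nat.cast_one]
          ring
        rw [Finset.sum_congr rfl key, ← Finset.mul_sum, ← ih 0 n (by omega)]
        simp only [Nat.choose_zero_right, Nat.cast_one, Nat.choose_eq_zero_of_lt (Nat.succ_pos n),
          Nat.cast_zero, zero_mul, mul_zero, zero_add, one_mul, pow_one, Nat.add_sub_cancel,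
          Nat.sub_zero]
        field_simp [hx, hz, hxz]
        ring
      · obtain ⟨a', rfl⟩ : ∃ a', a = a' + 1 := ⟨a - 1, by omega⟩
        obtain ⟨b', rfl⟩ : ∃ b', b = b' + 1 := ⟨b - 1, by omega⟩
        have hab1 : (a' + 1) + b' = n := by omega
        have hab2 : a' + (b' + 1) = n := by omega
        have key : ∀ k ∈ Finset.range (n + 1),
            ((k+1).choose (b'+1) : ℂ) * ((x + z) ^ (k + 1 + 1))⁻¹ * (x ^ (n + 1 + 1 - (k+1)))⁻¹
              + ((k+1).choose (a'+1) : ℂ) * ((x + z) ^ (k + 1 + 1))⁻¹ * (z ^ (n + 1 + 1 - (k+1)))⁻¹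
            = (x+z)⁻¹ * (((k.choose b' : ℂ) * ((x + z) ^ (k + 1))⁻¹ * (x ^ (n + 1 - k))⁻¹
                + (k.choose (a'+1) : ℂ) * ((x + z) ^ (k + 1))⁻¹ * (z ^ (n + 1 - k))⁻¹)
              + ((k.choose (b'+1) : ℂ) * ((x + z) ^ (k + 1))⁻¹ * (x ^ (n + 1 - k))⁻¹
                + (k.choose a' : ℂ) * ((x + z) ^ (k + 1))⁻¹ * (z ^ (n + 1 - k))⁻¹)) := by
          intro k hk
          have h1 : ((k+1).choose (b'+1) : ℂ) = (k.choose b' : ℂ) + (k.choose (b'+1) : ℂ) := by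
            rw [Nat.choose_succ_succ']; push_cast; ring
          have h1' : ((k+1).choose (a'+1) : ℂ) = (k.choose a' : ℂ) + (k.choose (a'+1) : ℂ) := by
            rw [Nat.choose_succ_succ']; push_cast; ring
          have h2 : n + 1 + 1 - (k+1) = n + 1 - k := by omega
          have h3 : ((x + z) ^ (k + 1 + 1))⁻¹ = (x+z)⁻¹ * ((x + z) ^ (k + 1))⁻¹ := by
            rw [pow_succ, mul_inv]; ring
          rw [h1, h1', h2, h3]
          ring
        rw [Finset.sum_congr rfl key]
        rw [← Finset.mul_sum, Finset.sum_add_distrib, ← ih (a'+1) b' hab1, ← ih a' (b'+1) hab2]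
        have h0 : ((0 : ℕ).choose (b'+1) : ℂ) = 0 := by
          simp [Nat.choose_eq_zero_of_lt]
        have h0' : ((0 : ℕ).choose (a'+1) : ℂ) = 0 := by
          simp [Nat.choose_eq_zero_of_lt]
        rw [h0, h0']
        field_simp [hx, hz, hxz]
        ring

/-- The partial fraction decomposition of `x^{-r} z^{-s}`: for nonzero complex `x, z`
with `x + z ≠ 0` and integers `r, s ≥ 1`,
`x^{-r} z^{-s} = Σ_{i+j=r+s} (C(i-1,s-1)(x+z)^{-i}x^{-j} + C(i-1,r-1)(x+z)^{-i}z^{-j})`. -/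
theorem partial_fraction_decomposition (x z : ℂ) (hx : x ≠ 0) (hz : z ≠ 0)
    (hxz : x + z ≠ 0) (r s : ℕ) (hr : 1 ≤ r) (hs : 1 ≤ s) :
    x ^ (-(r : ℤ)) * z ^ (-(s : ℤ)) =
      ∑ i ∈ Finset.Icc 1 (r + s - 1),
        (((i - 1).choose (s - 1) : ℂ) * (x + z) ^ (-(i : ℤ)) * x ^ (-((r + s - i : ℕ) : ℤ))
          + ((i - 1).choose (r - 1) : ℂ) * (x + z) ^ (-(i : ℤ)) *
            z ^ (-((r + s - i : ℕ) : ℤ))) := by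
  obtain ⟨a, rfl⟩ : ∃ a, r = a + 1 := ⟨r - 1, by omega⟩
  obtain ⟨b, rfl⟩ : ∃ b, s = b + 1 := ⟨s - 1, by omega⟩
  have hIcc : (a + 1) + (b + 1) - 1 = (a + b) + 1 := by omega
  rw [hIcc, ← Finset.Ico_add_one_right_eq_Icc, Finset.sum_Ico_eq_sum_range]
  have hzp : ∀ (w : ℂ) (m : ℕ), w ^ (-(m : ℤ)) = (w ^ m)⁻¹ := by
    intro w m
    rw [zpow_neg, zpow_natCast]
  rw [hzp x, hzp z]
  rw [show (a + b) + 1 + 1 - 1 = (a + b) + 1 from rfl]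
  rw [pfd_aux x z hx hz hxz (a + b) a b rfl]
  apply Finset.sum_congr rfl
  intro k hk
  have h1 : 1 + k - 1 = k := by omega
  have h2 : (a + 1) + (b + 1) - (1 + k) = (a + b) + 1 - k := by omega
  have h3 : (a + 1) - 1 = a := by omega
  have h4 : (b + 1) - 1 = b := by omega
  rw [h1, h2, h3, h4, hzp (x + z), hzp x, hzp z]
  have h5 : 1 + k = k + 1 := by omega
  rw [h5]
end

section
/- Let k₁, k₂ ≥ 1 be integers with k₁ + k₂ ≥ 3, let m₁, m₂ be integers, and let τ lie in the complex upper half-plane. Then lim_{N→∞} Σ (m₁τ+n₁)^{−k₁}(m₂τ+n₂)^{−k₂} = 0, where the sum ranges over integers n₁, n₂ with −N ≤ n₁, n₂ ≤ N, n₁+n₂ ∉ [−N, N], (m₁,n₁) ≠ (0,0), and (m₂,n₂) ≠ (0,0). -/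
/-!
Since `τ` lies in the upper half-plane there is `c > 0` with `c |n| ≤ |mτ + n|` for all integers
`m, n`. If `|n₁|, |n₂| ≤ N < |n₁ + n₂|`, then `n₁, n₂` are nonzero of the same sign and
`|n₁| + |n₂| > N`, so up to a constant the tail sum is bounded by `∑ (1 / (u v²) + 1 / (u² v))`
over `1 ≤ u, v ≤ N < u + v`, whose two halves are equal. For fixed `u` the inner sum of `1 / v²`
over `v > N - u` is at most `2 / (N + 1 - u)`, and `1 / (u (N + 1 - u)) = (1/u + 1/(N + 1 - u)) /
(N + 1)` bounds the whole sum by `4 H_N / (N + 1) = O(log N / N)`.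
-/

open Complex Finset Filter

lemma exists_pos_mul_abs_le_norm_mul_add {τ : ℂ} (hτ : 0 < τ.im) :
    ∃ c > 0, ∀ m n : ℤ, c * |(n : ℝ)| ≤ ‖(m : ℂ) * τ + n‖ := by
  refine ⟨EisensteinSeries.r ⟨τ, hτ⟩, EisensteinSeries.r_pos _, fun m n => ?_⟩
  rcases eq_or_ne ![m, n] 0 with h | h
  · obtain rfl : n = 0 := by simpa using congrFun h 1
    simp only [Int.cast_zero, abs_zero, mul_zero]
    positivity
  · calc _ ≤ EisensteinSeries.r ⟨τ, hτ⟩ * ‖![m, n]‖ := by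
          gcongr
          · exact (EisensteinSeries.r_pos _).le
          · simpa [Int.norm_eq_abs] using norm_le_pi_norm ![m, n] 1
      _ ≤ _ := by simpa using EisensteinSeries.r_mul_max_le ⟨τ, hτ⟩ h

lemma norm_zpow_neg_le_of_mul_abs_le {c : ℝ} (hc : 0 < c) {z : ℂ} {n : ℤ} (hn : n ≠ 0)
    (h : c * |(n : ℝ)| ≤ ‖z‖) (k : ℕ) :
    ‖z ^ (-(k : ℤ))‖ ≤ (c ^ k)⁻¹ * ((n.natAbs : ℝ) ^ k)⁻¹ := by
  have hpos : 0 < c * |(n : ℝ)| := by positivity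
  rw [norm_zpow, zpow_neg, zpow_natCast, Nat.cast_natAbs, Int.cast_abs, ← mul_inv, ← mul_pow]
  gcongr

noncomputable def tailPairs (N : ℕ) : Finset (ℤ × ℤ) :=
  (Icc (-(N : ℤ)) N ×ˢ Icc (-(N : ℤ)) N).filter (fun p => p.1 + p.2 ∉ Icc (-(N : ℤ)) N)

def natTailPairs (N : ℕ) : Finset (ℕ × ℕ) :=
  (Icc 1 N ×ˢ Icc 1 N).filter (fun q => N < q.1 + q.2)

lemma ne_zero_of_mem_tailPairs {N : ℕ} {p : ℤ × ℤ} (hp : p ∈ tailPairs N) :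
    p.1 ≠ 0 ∧ p.2 ≠ 0 := by
  simp only [tailPairs, mem_filter, mem_product, mem_Icc] at hp
  omega

lemma tailPairs_subset_image (N : ℕ) :
    tailPairs N ⊆ (natTailPairs N ×ˢ {1, -1}).image
      (fun x : (ℕ × ℕ) × ℤ => (x.2 * x.1.1, x.2 * x.1.2)) := by
  rintro ⟨x, y⟩ hp
  simp only [tailPairs, mem_filter, mem_product, mem_Icc] at hp
  simp only [natTailPairs, mem_image, mem_product, mem_filter, mem_Icc, mem_insert,
    mem_singleton, Prod.exists, Prod.mk.injEq]
  by_cases hx : 0 < x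
  · exact ⟨x.toNat, y.toNat, 1, by omega⟩
  · exact ⟨(-x).toNat, (-y).toNat, -1, by omega⟩

lemma sum_tailPairs_le (N : ℕ) (g : ℕ → ℕ → ℝ) (hg : ∀ u v, 0 ≤ g u v) :
    ∑ p ∈ tailPairs N, g p.1.natAbs p.2.natAbs ≤ 2 * ∑ q ∈ natTailPairs N, g q.1 q.2 := by
  calc _ ≤ ∑ p ∈ (natTailPairs N ×ˢ {1, -1}).image
          (fun x : (ℕ × ℕ) × ℤ => (x.2 * x.1.1, x.2 * x.1.2)), g p.1.natAbs p.2.natAbs :=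
        sum_le_sum_of_subset_of_nonneg (tailPairs_subset_image N) fun _ _ _ => hg _ _
    _ ≤ ∑ x ∈ natTailPairs N ×ˢ {1, -1}, g (x.2 * x.1.1 : ℤ).natAbs (x.2 * x.1.2 : ℤ).natAbs :=
        sum_image_le_of_nonneg fun _ _ => hg _ _
    _ = 2 * ∑ q ∈ natTailPairs N, g q.1 q.2 := by
        rw [sum_product, mul_sum]
        refine sum_congr rfl fun q _ => ?_
        rw [sum_pair (by norm_num)]
        simp only [one_mul, neg_one_mul, Int.natAbs_neg, Int.natAbs_natCast]
        ring

lemma sum_Icc_inv_sub_add_one_eq_harmonic (N : ℕ) :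
    ∑ u ∈ Icc 1 N, (((N - u : ℕ) : ℝ) + 1)⁻¹ = harmonic N := by
  rw [harmonic_eq_sum_Icc]
  push_cast
  refine sum_nbij' (fun u => N + 1 - u) (fun u => N + 1 - u) ?_ ?_ ?_ ?_ ?_ <;>
    intro u hu <;> simp only [mem_Icc] at hu ⊢
  · omega
  · omega
  · omega
  · omega
  · congr 1
    rw [Nat.cast_sub (by omega), Nat.cast_sub (by omega)]
    push_cast
    ring

lemma sum_natTailPairs_inv_mul_inv_sq_le (N : ℕ) :
    ∑ q ∈ natTailPairs N, (q.1 : ℝ)⁻¹ * ((q.2 : ℝ) ^ 2)⁻¹ ≤ 4 * ((1 + Real.log N) / (N + 1)) := by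
  have hfiber : ∀ u, (Icc 1 N).filter (fun v => N < u + v) = Ioo (N - u) (N + 1) := by
    intro u; ext v; simp only [mem_filter, mem_Icc, mem_Ioo]; omega
  have hsplit : ∀ u ∈ Icc 1 N, (u : ℝ)⁻¹ * (((N - u : ℕ) : ℝ) + 1)⁻¹ =
      ((N : ℝ) + 1)⁻¹ * ((u : ℝ)⁻¹ + (((N - u : ℕ) : ℝ) + 1)⁻¹) := by
    intro u hu
    rw [mem_Icc] at hu
    have hu₀ : (0 : ℝ) < u := by exact_mod_cast hu.1
    have huN : (u : ℝ) ≤ N := by exact_mod_cast hu.2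
    rw [Nat.cast_sub hu.2]
    have hNu : (0 : ℝ) < N - u + 1 := by linarith
    field_simp
    ring
  calc ∑ q ∈ natTailPairs N, (q.1 : ℝ)⁻¹ * ((q.2 : ℝ) ^ 2)⁻¹
      = ∑ u ∈ Icc 1 N, (u : ℝ)⁻¹ * ∑ v ∈ Ioo (N - u) (N + 1), ((v : ℝ) ^ 2)⁻¹ := by
        rw [natTailPairs, sum_filter, sum_product]
        refine sum_congr rfl fun u _ => ?_
        rw [← hfiber, sum_filter, mul_sum]
        refine sum_congr rfl fun v _ => ?_
        split_ifs <;> simp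
    _ ≤ ∑ u ∈ Icc 1 N, (u : ℝ)⁻¹ * (2 / ((N - u : ℕ) + 1)) := by
        gcongr
        exact sum_Ioo_inv_sq_le _ _
    _ = 2 * ((N : ℝ) + 1)⁻¹ * (∑ u ∈ Icc 1 N, (u : ℝ)⁻¹ +
          ∑ u ∈ Icc 1 N, (((N - u : ℕ) : ℝ) + 1)⁻¹) := by
        rw [← sum_add_distrib, mul_assoc, mul_sum, mul_sum]
        refine sum_congr rfl fun u hu => ?_
        rw [← hsplit u hu]
        ring
    _ = 4 * (harmonic N / (N + 1)) := by
        rw [sum_Icc_inv_sub_add_one_eq_harmonic, harmonic_eq_sum_Icc]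
        push_cast
        ring
    _ ≤ 4 * ((1 + Real.log N) / (N + 1)) := by
        gcongr
        exact harmonic_le_one_add_log N

lemma tendsto_one_add_log_div_add_one :
    Tendsto (fun N : ℕ => (1 + Real.log N) / (N + 1)) atTop (nhds 0) := by
  have hlog := Real.tendsto_pow_log_div_mul_add_atTop 1 1 1 one_ne_zero
  have hinv := tendsto_inv_atTop_zero.comp (tendsto_atTop_add_const_right atTop (1 : ℝ) tendsto_id)
  simpa [add_div, Function.comp_def] using (hinv.add hlog).comp tendsto_natCast_atTop_atTop

lemma inv_pow_mul_inv_pow_le {u v : ℝ} (hu : 1 ≤ u) (hv : 1 ≤ v) {a b : ℕ} (ha : 1 ≤ a)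
    (hb : 1 ≤ b) (hab : 3 ≤ a + b) :
    (u ^ a)⁻¹ * (v ^ b)⁻¹ ≤ u⁻¹ * (v ^ 2)⁻¹ + (u ^ 2)⁻¹ * v⁻¹ := by
  rcases le_or_gt 2 b with hb2 | hb2
  · calc _ ≤ (u ^ 1)⁻¹ * (v ^ 2)⁻¹ := by gcongr
      _ ≤ _ := by rw [pow_one]; exact le_add_of_nonneg_right (by positivity)
  · calc _ ≤ (u ^ 2)⁻¹ * (v ^ 1)⁻¹ := by gcongr; omega
      _ ≤ _ := by rw [pow_one]; exact le_add_of_nonneg_left (by positivity)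

lemma tendsto_sum_tailPairs_inv_pow {a b : ℕ} (ha : 1 ≤ a) (hb : 1 ≤ b) (hab : 3 ≤ a + b) :
    Tendsto (fun N : ℕ => ∑ p ∈ tailPairs N,
      ((p.1.natAbs : ℝ) ^ a)⁻¹ * ((p.2.natAbs : ℝ) ^ b)⁻¹) atTop (nhds 0) := by
  have hswap : ∀ N, ∑ q ∈ natTailPairs N, ((q.1 : ℝ) ^ 2)⁻¹ * (q.2 : ℝ)⁻¹ =
      ∑ q ∈ natTailPairs N, (q.1 : ℝ)⁻¹ * ((q.2 : ℝ) ^ 2)⁻¹ := by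
    intro N
    refine sum_equiv (Equiv.prodComm ℕ ℕ) (fun q => ?_) fun q _ => mul_comm _ _
    simp only [natTailPairs, mem_filter, mem_product, mem_Icc, Equiv.prodComm_apply,
      Prod.fst_swap, Prod.snd_swap]
    omega
  refine squeeze_zero (fun N => by positivity) (fun N => ?_)
    (by simpa using tendsto_one_add_log_div_add_one.const_mul 16)
  calc _ ≤ 2 * ∑ q ∈ natTailPairs N, ((q.1 : ℝ) ^ a)⁻¹ * ((q.2 : ℝ) ^ b)⁻¹ :=
        sum_tailPairs_le N (fun u v => ((u : ℝ) ^ a)⁻¹ * ((v : ℝ) ^ b)⁻¹) fun _ _ => by positivity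
    _ ≤ 2 * ∑ q ∈ natTailPairs N,
          ((q.1 : ℝ)⁻¹ * ((q.2 : ℝ) ^ 2)⁻¹ + ((q.1 : ℝ) ^ 2)⁻¹ * (q.2 : ℝ)⁻¹) := by
        gcongr with q hq
        simp only [natTailPairs, mem_filter, mem_product, mem_Icc] at hq
        exact inv_pow_mul_inv_pow_le (by exact_mod_cast hq.1.1.1) (by exact_mod_cast hq.1.2.1)
          ha hb hab
    _ ≤ 16 * ((1 + Real.log N) / (N + 1)) := by
        rw [sum_add_distrib, hswap]
        linarith [sum_natTailPairs_inv_mul_inv_sq_le N]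

/-- For integers `k₁, k₂ ≥ 1` with `k₁ + k₂ ≥ 3`, integers `m₁, m₂`, and `τ` in the
upper half-plane, the sum of `(m₁τ+n₁)^{-k₁}(m₂τ+n₂)^{-k₂}` over `-N ≤ n₁, n₂ ≤ N`
with `n₁ + n₂ ∉ [-N, N]`, `(m₁,n₁) ≠ (0,0)` and `(m₂,n₂) ≠ (0,0)` tends to `0` as
`N → ∞`. -/
theorem tail_sum_tendsto_zero (k₁ k₂ : ℕ) (h₁ : 1 ≤ k₁) (h₂ : 1 ≤ k₂)
    (h₃ : 3 ≤ k₁ + k₂) (m₁ m₂ : ℤ) (τ : ℂ) (hτ : 0 < τ.im) :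
    Filter.Tendsto
      (fun N : ℕ =>
        ∑ p ∈ (Finset.Icc (-(N : ℤ)) N ×ˢ Finset.Icc (-(N : ℤ)) N).filter
            (fun p => p.1 + p.2 ∉ Finset.Icc (-(N : ℤ)) N ∧
              (m₁, p.1) ≠ (0, 0) ∧ (m₂, p.2) ≠ (0, 0)),
          ((m₁ : ℂ) * τ + p.1) ^ (-(k₁ : ℤ)) * ((m₂ : ℂ) * τ + p.2) ^ (-(k₂ : ℤ)))
      Filter.atTop (nhds 0) := by
  obtain ⟨c, hc, hbound⟩ := exists_pos_mul_abs_le_norm_mul_add hτ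
  refine squeeze_zero_norm (fun N => ?_) (by simpa only [mul_zero] using
    (tendsto_sum_tailPairs_inv_pow h₁ h₂ h₃).const_mul ((c ^ k₁)⁻¹ * (c ^ k₂)⁻¹))
  refine (norm_sum_le _ _).trans ?_
  rw [mul_sum]
  refine (sum_le_sum_of_subset_of_nonneg (monotone_filter_right _ fun _ _ h => h.1)
    fun _ _ _ => by positivity).trans' (sum_le_sum fun p hp => ?_)
  obtain ⟨hp₁, hp₂⟩ := ne_zero_of_mem_tailPairs (monotone_filter_right _ (fun _ _ h => h.1) hp)
  rw [norm_mul]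
  calc _ ≤ (c ^ k₁)⁻¹ * ((p.1.natAbs : ℝ) ^ k₁)⁻¹ * ((c ^ k₂)⁻¹ * ((p.2.natAbs : ℝ) ^ k₂)⁻¹) :=
        mul_le_mul (norm_zpow_neg_le_of_mul_abs_le hc hp₁ (hbound m₁ p.1) k₁)
          (norm_zpow_neg_le_of_mul_abs_le hc hp₂ (hbound m₂ p.2) k₂) (norm_nonneg _)
          (by positivity)
    _ = _ := by ring
end
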